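/- Let p ≥ 1 and s = p, and for θ ∈ ℝ^p let P_{θ,1} := N(θ, 1_p 1_pᵀ). Define R(ε) := inf_φ { P_{0,1}(φ = 1) + sup_{θ ∈ Θ(p,p,ε)} P_{θ,1}(φ = 0) } over measurable φ : ℝ^p → {0,1}, where Θ(p,p,ε) := {θ ∈ ℝ^p : ‖θ‖ ≥ ε}. Then: (i) for every η ∈ (0,1) there exists C_η > 0 depending only on η such that for all C > C_η, R(C√p) ≤ η; and (ii) for every η ∈ (0,1) there exists c_η > 0 depending only on η such that for all 0 < c < c_η, R(c√p) ≥ 1 − η. (That is, the squared minimax separation rate at γ = 1, s = p is of order p.) -/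

import Mathlib

/-!
Under `N(θ, 1 1ᵀ)` the observation is `θ + ξ 1` with a single scalar `ξ ~ N(0, 1)`, because the
square root of `1 1ᵀ` is `1 1ᵀ / √p`. Under the null the observation lies on the line `ℝ 1`,
and under an alternative it lies on that line only if `θ = a 1` itself, with `|a| √p = ‖θ‖`.
Hence accepting exactly on a large compact segment `{t 1 : |t| ≤ M}` of the line has both errors
bounded by a tail of `ξ`, once `‖θ‖ > 2 M √p`. Conversely, against the single alternative
`θ = c 1` any test only sees the scalar `ξ` versus `c + ξ`, and the total variation distance
between `N(0, 1)` and `N(c, 1)` is at most `c / 2`.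
-/

open MeasureTheory ProbabilityTheory Matrix Finset
open scoped Classical

noncomputable section

/-- The standard Gaussian measure on `Fin p → ℝ`. -/
def stdGaussianPi (p : ℕ) : Measure (Fin p → ℝ) :=
  Measure.pi fun _ => gaussianReal 0 1

/-- The Gaussian measure `N(θ, S)` on `ℝ^p` with mean `θ` and positive semidefinite
covariance matrix `S`, realized as the pushforward of the standard Gaussian under
`x ↦ θ + √S x` (junk value `0` if `S` is not positive semidefinite). -/
def gaussianPi {p : ℕ} (θ : Fin p → ℝ) (S : Matrix (Fin p) (Fin p) ℝ) :
    Measure (Fin p → ℝ) :=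
  if h : S.PosSemidef then (stdGaussianPi p).map (fun x => θ +
    ((h.1.eigenvectorUnitary : Matrix (Fin p) (Fin p) ℝ) *
      diagonal (fun i => Real.sqrt (h.1.eigenvalues i)) *
      star (h.1.eigenvectorUnitary : Matrix (Fin p) (Fin p) ℝ)).mulVec x) else 0

/-- `‖θ‖₀`, the number of nonzero coordinates. -/
def sparsity {p : ℕ} (θ : Fin p → ℝ) : ℕ := Set.ncard {i | θ i ≠ 0}

/-- The Euclidean norm on `Fin p → ℝ`. -/
def l2norm {p : ℕ} (θ : Fin p → ℝ) : ℝ := Real.sqrt (∑ i, θ i ^ 2)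

/-- Minimax testing risk: infimum over measurable tests `φ : ℝ^p → {0,1}` of the
type I error under `P 0` plus the worst-case type II error over the alternative `T`. -/
def minimaxRisk {p : ℕ} (P : (Fin p → ℝ) → Measure (Fin p → ℝ))
    (T : Set (Fin p → ℝ)) : ℝ :=
  ⨅ φ : {f : (Fin p → ℝ) → Bool // Measurable f},
    ((P 0 {x | φ.1 x = true}).toReal + ⨆ θ ∈ T, (P θ {x | φ.1 x = false}).toReal)

open scoped NNReal

lemma map_sum_pi_gaussianReal {ι : Type*} [Fintype ι] (m : ι → ℝ) (v : ι → ℝ≥0) :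
    (Measure.pi fun i => gaussianReal (m i) (v i)).map (fun x => ∑ i, x i)
      = gaussianReal (∑ i, m i) (∑ i, v i) := by
  refine Measure.ext_of_charFun (funext fun t => ?_)
  rw [charFun_map_sum_pi_eq_prod, Finset.prod_apply]
  simp only [charFun_gaussianReal, ← Complex.exp_sum]
  push_cast
  rw [Finset.mul_sum, Finset.sum_mul, Finset.sum_mul, Finset.sum_div,
    ← Finset.sum_sub_distrib]

lemma Matrix.posSemidef_const {n : Type*} [Fintype n] {r : ℝ} (hr : 0 ≤ r) :
    (of fun _ _ : n => r).PosSemidef := by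
  convert posSemidef_vecMulVec_self_star (fun _ : n => Real.sqrt r) using 1
  ext i j
  simp [vecMulVec_apply, Real.mul_self_sqrt hr]

open scoped MatrixOrder in
lemma Matrix.PosSemidef.spectral_sqrt_eq_of_mul_self_eq {n : Type*} [Fintype n] [DecidableEq n]
    {A B : Matrix n n ℝ} (hA : A.PosSemidef) (hB : B.PosSemidef) (hBB : B * B = A) :
    (hA.1.eigenvectorUnitary : Matrix n n ℝ) * diagonal (fun i => Real.sqrt (hA.1.eigenvalues i)) *
      star (hA.1.eigenvectorUnitary : Matrix n n ℝ) = B := by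
  have h := CFC.sqrt_eq_real_sqrt A hA.nonneg
  rw [(CFC.sqrt_eq_iff A B hA.nonneg hB.nonneg).2 hBB, cfcₙ_eq_cfc (hf0 := Real.sqrt_zero),
    hA.1.cfc_eq, Matrix.IsHermitian.cfc, Unitary.conjStarAlgAut_apply] at h
  exact h.symm

def commonNoiseLaw {p : ℕ} (ν : Measure ℝ) (θ : Fin p → ℝ) : Measure (Fin p → ℝ) :=
  ν.map fun t => θ + Function.const (Fin p) t

lemma gaussianPi_const_one_eq_commonNoiseLaw {p : ℕ} [NeZero p] (θ : Fin p → ℝ) :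
    gaussianPi θ (of fun _ _ => 1) = commonNoiseLaw (gaussianReal 0 1) θ := by
  have hp : (0 : ℝ) < p := by exact_mod_cast Nat.pos_of_neZero p
  set B : Matrix (Fin p) (Fin p) ℝ := of fun _ _ => (Real.sqrt p)⁻¹
  have hBB : B * B = of fun _ _ => 1 := by
    ext i j
    simp [B, mul_apply, ← mul_inv, Real.mul_self_sqrt hp.le, hp.ne']
  have hS : (of fun _ _ : Fin p => (1 : ℝ)).PosSemidef := posSemidef_const zero_le_one
  have hB : B.PosSemidef := posSemidef_const (by positivity)
  have hcomp : (fun x => θ + B *ᵥ x) = (fun t => θ + Function.const (Fin p) t) ∘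
      (fun t => (Real.sqrt p)⁻¹ * t) ∘ (fun x : Fin p → ℝ => ∑ i, x i) := by
    ext x i
    simp [B, mulVec, dotProduct, Finset.mul_sum]
  rw [gaussianPi, dif_pos hS, hS.spectral_sqrt_eq_of_mul_self_eq hB hBB, hcomp,
    ← Measure.map_map (by fun_prop) (by fun_prop), ← Measure.map_map (by fun_prop) (by fun_prop),
    stdGaussianPi, map_sum_pi_gaussianReal (fun _ => 0) (fun _ => 1), gaussianReal_map_const_mul]
  congr 2
  · simp
  · ext
    simp [Real.sq_sqrt hp.le, hp.ne']

section minimaxRisk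

variable {p : ℕ} {P : (Fin p → ℝ) → Measure (Fin p → ℝ)} {T : Set (Fin p → ℝ)}

lemma minimaxRisk_le_of_measurableSet {E : Set (Fin p → ℝ)} (hE : MeasurableSet E) {β : ℝ}
    (hβ : 0 ≤ β) (h : ∀ θ ∈ T, (P θ Eᶜ).toReal ≤ β) :
    minimaxRisk P T ≤ (P 0 E).toReal + β := by
  have hbdd : BddBelow (Set.range fun φ : {f : (Fin p → ℝ) → Bool // Measurable f} =>
      (P 0 {x | φ.1 x = true}).toReal + ⨆ θ ∈ T, (P θ {x | φ.1 x = false}).toReal) :=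
    ⟨0, by
      rintro _ ⟨φ, rfl⟩
      exact add_nonneg ENNReal.toReal_nonneg
        (Real.iSup_nonneg fun _ => Real.iSup_nonneg fun _ => ENNReal.toReal_nonneg)⟩
  have hφ : Measurable fun x => decide (x ∈ E) :=
    measurable_to_bool (by simpa [Set.preimage, Set.ofPred_mem_eq] using hE)
  refine (ciInf_le hbdd ⟨_, hφ⟩).trans ?_
  simp only [decide_eq_true_eq, decide_eq_false_iff_not, Set.ofPred_mem_eq]
  gcongr
  exact Real.iSup_le (fun θ => Real.iSup_le (h θ) hβ) hβ

lemma le_minimaxRisk_of_mem [∀ θ, IsProbabilityMeasure (P θ)] {θ₁ : Fin p → ℝ} (hθ₁ : θ₁ ∈ T)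
    {b : ℝ} (h : ∀ E, MeasurableSet E → b ≤ (P 0 E).toReal + (P θ₁ Eᶜ).toReal) :
    b ≤ minimaxRisk P T := by
  have : Nonempty {f : (Fin p → ℝ) → Bool // Measurable f} := ⟨⟨fun _ => true, measurable_const⟩⟩
  refine le_ciInf fun φ => (h _ (φ.2 (measurableSet_singleton true))).trans ?_
  have hcompl : (φ.1 ⁻¹' {true})ᶜ = {x | φ.1 x = false} := by ext; simp
  have hbdd : BddAbove (Set.range fun θ => ⨆ _ : θ ∈ T, (P θ {x | φ.1 x = false}).toReal) :=
    ⟨1, by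
      rintro _ ⟨θ, rfl⟩
      exact Real.iSup_le (fun _ => measureReal_le_one) zero_le_one⟩
  rw [hcompl]
  exact add_le_add le_rfl (le_ciSup_of_le hbdd θ₁ (by rw [ciSup_pos hθ₁]))

end minimaxRisk

lemma l2norm_const {p : ℕ} (a : ℝ) : l2norm (Function.const (Fin p) a) = |a| * Real.sqrt p := by
  simp [l2norm, Real.sqrt_mul' _ (sq_nonneg a), Real.sqrt_sq_eq_abs, mul_comm]

section commonNoiseLaw

variable {p : ℕ} (ν : Measure ℝ)

instance [IsProbabilityMeasure ν] (θ : Fin p → ℝ) : IsProbabilityMeasure (commonNoiseLaw ν θ) :=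
  Measure.isProbabilityMeasure_map (by fun_prop)

lemma commonNoiseLaw_apply (θ : Fin p → ℝ) {s : Set (Fin p → ℝ)} (hs : MeasurableSet s) :
    commonNoiseLaw ν θ s = ν {t | θ + Function.const (Fin p) t ∈ s} :=
  Measure.map_apply (by fun_prop) hs

lemma minimaxRisk_commonNoiseLaw_le [NeZero p] [IsFiniteMeasure ν] {η : ℝ} (hη : 0 < η) :
    ∃ C₀ : ℝ, 0 < C₀ ∧ ∀ C : ℝ, C₀ < C →
      minimaxRisk (commonNoiseLaw ν) {θ : Fin p → ℝ | C * Real.sqrt p ≤ l2norm θ} ≤ η := by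
  obtain ⟨K, hK, hνK⟩ := isTightMeasureSet_iff_exists_isCompact_measure_compl_le.1
    (isTightMeasureSet_singleton (μ := ν)) (ENNReal.ofReal (η / 2)) (by simpa using hη)
  have htail : (ν Kᶜ).toReal ≤ η / 2 :=
    ENNReal.toReal_le_of_le_ofReal (by positivity) (hνK ν rfl)
  obtain ⟨M, hM, hKM⟩ := hK.isBounded.subset_closedBall_lt 0 0
  refine ⟨2 * M, by positivity, fun C hC => ?_⟩
  -- accept `H₀` exactly on the segment `{t • 1 : t ∈ K}`
  set A := Function.const (Fin p) '' K
  have hA : MeasurableSet A := (hK.image (by fun_prop)).isClosed.measurableSet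
  have htypeI : commonNoiseLaw ν 0 Aᶜ = ν Kᶜ := by
    rw [commonNoiseLaw_apply ν 0 hA.compl]
    simp only [A, zero_add, (Function.const_injective (α := Fin p) (β := ℝ)).mem_set_image,
      Set.mem_compl_iff]
    rfl
  have htypeII : ∀ θ ∈ {θ : Fin p → ℝ | C * Real.sqrt p ≤ l2norm θ},
      (commonNoiseLaw ν θ Aᶜᶜ).toReal ≤ η / 2 := by
    intro θ hθ
    refine le_trans (ENNReal.toReal_mono (measure_ne_top _ _) ?_) htail
    rw [compl_compl, commonNoiseLaw_apply ν θ hA]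
    refine measure_mono fun t ⟨s, hs, hst⟩ ht => ?_
    have hθs : θ = Function.const (Fin p) (s - t) := by
      ext i
      have := congrFun hst i
      simp only [Function.const_apply, Pi.add_apply] at this ⊢
      linarith
    have hsp : 0 < Real.sqrt p := Real.sqrt_pos.2 (by exact_mod_cast Nat.pos_of_neZero p)
    rw [Set.mem_ofPred_eq, hθs, l2norm_const] at hθ
    have hCst := le_of_mul_le_mul_right hθ hsp
    have hs' := mem_closedBall_zero_iff.1 (hKM hs)
    have ht' := mem_closedBall_zero_iff.1 (hKM ht)
    rw [Real.norm_eq_abs] at hs' ht'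
    linarith [abs_sub s t]
  calc minimaxRisk (commonNoiseLaw ν) {θ : Fin p → ℝ | C * Real.sqrt p ≤ l2norm θ}
      ≤ (commonNoiseLaw ν 0 Aᶜ).toReal + η / 2 :=
        minimaxRisk_le_of_measurableSet hA.compl (by positivity) htypeII
    _ ≤ η / 2 + η / 2 := by rw [htypeI]; gcongr
    _ = η := add_halves η

lemma le_minimaxRisk_commonNoiseLaw [IsProbabilityMeasure ν] {c b : ℝ} (hc : 0 ≤ c)
    (h : ∀ D, MeasurableSet D → b ≤ (ν D).toReal + (ν.map (c + ·) Dᶜ).toReal) :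
    b ≤ minimaxRisk (commonNoiseLaw ν) {θ : Fin p → ℝ | c * Real.sqrt p ≤ l2norm θ} := by
  refine le_minimaxRisk_of_mem (θ₁ := Function.const (Fin p) c)
    (by simp [l2norm_const, abs_of_nonneg hc]) fun E hE => ?_
  have hD : MeasurableSet (Function.const (Fin p) ⁻¹' E) := hE.preimage (by fun_prop)
  convert h _ hD using 3
  · rw [commonNoiseLaw_apply ν 0 hE]
    simp only [zero_add]
    rfl
  · rw [commonNoiseLaw_apply ν _ hE.compl, Measure.map_apply (by fun_prop) hD.compl]
    rfl

end commonNoiseLaw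

lemma gaussianReal_le_of_sq_le {m₁ m₂ : ℝ} {v : ℝ≥0} (hv : v ≠ 0) {s : Set ℝ}
    (h : ∀ x ∈ s, (x - m₁) ^ 2 ≤ (x - m₂) ^ 2) :
    gaussianReal m₂ v s ≤ gaussianReal m₁ v s := by
  rw [gaussianReal_apply _ hv, gaussianReal_apply _ hv]
  refine setLIntegral_mono (measurable_gaussianPDF _ _) fun x hx => ?_
  refine ENNReal.ofReal_le_ofReal (mul_le_mul_of_nonneg_left (Real.exp_le_exp.2 ?_) (by positivity))
  exact div_le_div_of_nonneg_right (neg_le_neg (h x hx)) (by positivity)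

lemma gaussianReal_le_half_mul_volume (m : ℝ) (s : Set ℝ) :
    gaussianReal m 1 s ≤ ENNReal.ofReal (1 / 2) * volume s := by
  rw [gaussianReal_apply _ one_ne_zero, ← setLIntegral_const]
  refine setLIntegral_mono measurable_const fun x _ => ENNReal.ofReal_le_ofReal ?_
  have h2 : 2 ≤ Real.sqrt (2 * Real.pi) :=
    Real.le_sqrt_of_sq_le (by nlinarith [Real.pi_gt_three])
  calc gaussianPDFReal m 1 x ≤ (Real.sqrt (2 * Real.pi))⁻¹ * 1 := by
        refine mul_le_mul (by simp) (Real.exp_le_one_iff.2 ?_) (by positivity) (by positivity)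
        rw [neg_div]
        exact neg_nonpos.2 (by positivity)
    _ ≤ 1 / 2 := by rw [mul_one, one_div]; gcongr

lemma measure_add_le_add_of_le_on {α : Type*} [MeasurableSpace α] {μ ν : Measure α}
    {I D : Set α} (hI : MeasurableSet I) (hD : MeasurableSet D)
    (hμν : ∀ s ⊆ Iᶜ, MeasurableSet s → μ s ≤ ν s) (hνμ : ∀ s ⊆ I, MeasurableSet s → ν s ≤ μ s) :
    μ D + ν I ≤ ν D + μ I := by
  have h₁ := hμν (D \ I) (fun x hx => hx.2) (hD.diff hI)
  have h₂ := hνμ (I \ D) Set.sdiff_subset (hI.diff hD)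
  calc μ D + ν I = μ (D ∩ I) + μ (D \ I) + (ν (I ∩ D) + ν (I \ D)) := by
        rw [measure_inter_add_sdiff D hI, measure_inter_add_sdiff I hD]
    _ ≤ μ (D ∩ I) + ν (D \ I) + (ν (I ∩ D) + μ (I \ D)) := by gcongr
    _ = ν D + μ I := by
        rw [← measure_inter_add_sdiff D hI, ← measure_inter_add_sdiff I hD (μ := μ),
          Set.inter_comm I D]
        ring

lemma gaussianReal_le_gaussianReal_zero_add {c : ℝ} (hc : 0 ≤ c) {D : Set ℝ}
    (hD : MeasurableSet D) :
    gaussianReal c 1 D ≤ gaussianReal 0 1 D + ENNReal.ofReal (c / 2) := by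
  -- `I` is where the density of `N(c, 1)` dominates that of `N(0, 1)`
  set I := Set.Ici (c / 2)
  have hswap := measure_add_le_add_of_le_on (μ := gaussianReal c 1) (ν := gaussianReal 0 1)
    measurableSet_Ici hD
    (fun s hs _ => gaussianReal_le_of_sq_le one_ne_zero fun x hx => by
      have : x < c / 2 := not_le.1 (hs hx)
      nlinarith)
    (fun s hs _ => gaussianReal_le_of_sq_le one_ne_zero fun x hx => by
      have : c / 2 ≤ x := hs hx
      nlinarith)
  have hI : gaussianReal c 1 I =
      gaussianReal 0 1 (Set.Ico (-(c / 2)) (c / 2)) + gaussianReal 0 1 I := by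
    have hshift : gaussianReal c 1 = (gaussianReal 0 1).map (· + c) := by
      rw [gaussianReal_map_add_const, zero_add]
    rw [hshift, Measure.map_apply (measurable_add_const c) measurableSet_Ici,
      Set.preimage_add_const_Ici, show c / 2 - c = -(c / 2) by ring,
      ← Set.Ico_union_Ici_eq_Ici (by linarith : -(c / 2) ≤ c / 2),
      measure_union ((Set.Iio_disjoint_Ici le_rfl).mono_left Set.Ico_subset_Iio_self)
        measurableSet_Ici]
  have hIco : gaussianReal 0 1 (Set.Ico (-(c / 2)) (c / 2)) ≤ ENNReal.ofReal (c / 2) := by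
    refine (gaussianReal_le_half_mul_volume 0 _).trans_eq ?_
    rw [Real.volume_Ico, ← ENNReal.ofReal_mul (by norm_num)]
    ring_nf
  rw [hI, ← add_assoc] at hswap
  calc gaussianReal c 1 D ≤ gaussianReal 0 1 D + gaussianReal 0 1 (Set.Ico (-(c / 2)) (c / 2)) :=
        (ENNReal.add_le_add_iff_right (measure_ne_top _ _)).1 hswap
    _ ≤ _ := by gcongr

lemma one_sub_half_le_minimaxRisk_gaussian {p : ℕ} {c : ℝ} (hc : 0 ≤ c) :
    1 - c / 2 ≤ minimaxRisk (commonNoiseLaw (gaussianReal 0 1))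
      {θ : Fin p → ℝ | c * Real.sqrt p ≤ l2norm θ} := by
  refine le_minimaxRisk_commonNoiseLaw _ hc fun D hD => ?_
  have hshift := ENNReal.toReal_mono (by finiteness) (gaussianReal_le_gaussianReal_zero_add hc hD)
  rw [ENNReal.toReal_add (measure_ne_top _ _) ENNReal.ofReal_ne_top,
    ENNReal.toReal_ofReal (by positivity)] at hshift
  rw [gaussianReal_map_const_add, zero_add, prob_compl_eq_one_sub hD,
    ENNReal.toReal_sub_of_le prob_le_one ENNReal.one_ne_top, ENNReal.toReal_one]
  linarith

theorem perfect_correlation_dense_rate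
    (p : ℕ) (hp : 1 ≤ p) :
    (let P : (Fin p → ℝ) → Measure (Fin p → ℝ) := fun θ =>
      gaussianPi θ (Matrix.of fun _ _ => (1 : ℝ))
    let R : ℝ → ℝ := fun ε => minimaxRisk P {θ | ε ≤ l2norm θ}
    (∀ η : ℝ, 0 < η → η < 1 → ∃ Cη : ℝ, 0 < Cη ∧
        ∀ C : ℝ, Cη < C → R (C * Real.sqrt p) ≤ η) ∧
      (∀ η : ℝ, 0 < η → η < 1 → ∃ cη : ℝ, 0 < cη ∧
        ∀ c : ℝ, 0 < c → c < cη → 1 - η ≤ R (c * Real.sqrt p))) := by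
  have : NeZero p := ⟨by omega⟩
  intro P R
  have hP : P = commonNoiseLaw (gaussianReal 0 1) := funext gaussianPi_const_one_eq_commonNoiseLaw
  refine ⟨fun η hη _ => ?_, fun η hη _ => ⟨2 * η, by positivity, fun c hc hcη => ?_⟩⟩
  · simpa only [R, hP] using minimaxRisk_commonNoiseLaw_le (gaussianReal 0 1) hη
  · have := one_sub_half_le_minimaxRisk_gaussian (p := p) hc.le
    simp only [R, hP]
    linarith

end
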